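/- arXiv:0904.0591 — 3 statements merged into one kernel-verified Lean document; each statement's English description precedes it below -/
import Mathlib

section
/- Let V be a finite-dimensional real inner product space and let p ≥ 2. Then for every x, y ∈ V it holds that ⟨|x|^{p-2}x - |y|^{p-2}y, x - y⟩ ≥ (2/(p(2^{p-1}-1)))|x - y|^p. -/
/-!
With `α = ‖x‖`, `β = ‖y‖` and `s = ‖x - y‖²`, polarization makes twice the left-hand side the affine
function `(α^{p-2} + β^{p-2}) s + (α^{p-2} - β^{p-2})(α² - β²)` of `s`, while `‖x - y‖^p = s^{p/2}` is
convex in `s`. Since `s` ranges over `[(α - β)², (α + β)²]`, it suffices to check the two endpoints,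
i.e. parallel and antiparallel `x, y`. There the inequality, even with the larger constant
`2^{2-p}`, follows from superadditivity of `t ↦ t^{p-1}` and from the power mean inequality
`(α + β)^{p-1} ≤ 2^{p-2}(α^{p-1} + β^{p-1})`.
-/

open scoped RealInnerProductSpace

open Set

lemma Real.rpow_add_le_mul_rpow_add_rpow {p a b : ℝ} (ha : 0 ≤ a) (hb : 0 ≤ b) (hp : 1 ≤ p) :
    (a + b) ^ p ≤ 2 ^ (p - 1) * (a ^ p + b ^ p) := by
  lift a to NNReal using ha
  lift b to NNReal using hb
  exact_mod_cast NNReal.rpow_add_le_mul_rpow_add_rpow a b hp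

lemma ConvexOn.le_affine_of_mem_Icc {s : Set ℝ} {f : ℝ → ℝ} (hf : ConvexOn ℝ s f)
    {a b z m k : ℝ} (ha : a ∈ s) (hb : b ∈ s) (hz : z ∈ Icc a b)
    (hfa : f a ≤ m * a + k) (hfb : f b ≤ m * b + k) : f z ≤ m * z + k := by
  have haff : ConcaveOn ℝ s fun t ↦ m * t + k :=
    ⟨hf.1, fun u _ v _ μ ν _ _ hμν ↦ by
      simp only [smul_eq_mul]; linear_combination k * hμν⟩
  have := (hf.sub haff).le_max_of_mem_Icc ha hb hz
  simp only [Pi.sub_apply, le_max_iff] at this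
  rcases this with h | h <;> linarith

section ScalarBounds

variable {p α β : ℝ}

lemma abs_sub_rpow_le_mul_sub_rpow (hp : 2 ≤ p) (hα : 0 ≤ α) (hβ : 0 ≤ β) :
    |α - β| ^ p ≤ (α - β) * (α ^ (p - 1) - β ^ (p - 1)) := by
  wlog hβα : β ≤ α generalizing α β
  · rw [abs_sub_comm]
    linarith [this hβ hα (le_of_not_ge hβα)]
  have hd : 0 ≤ α - β := sub_nonneg.2 hβα
  have hsuper : β ^ (p - 1) + (α - β) ^ (p - 1) ≤ α ^ (p - 1) := by
    simpa using Real.add_rpow_le_rpow_add hβ hd (by linarith : 1 ≤ p - 1)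
  calc |α - β| ^ p = (α - β) * (α - β) ^ (p - 1) := by
        rw [abs_of_nonneg hd, mul_comm, ← Real.rpow_add_one' hd (by linarith), sub_add_cancel]
    _ ≤ (α - β) * (α ^ (p - 1) - β ^ (p - 1)) := by gcongr; linarith

lemma two_rpow_mul_add_rpow_le (hp : 2 ≤ p) (hα : 0 ≤ α) (hβ : 0 ≤ β) :
    2 ^ (2 - p) * (α + β) ^ p ≤ (α + β) * (α ^ (p - 1) + β ^ (p - 1)) := by
  have hs : 0 ≤ α + β := add_nonneg hα hβ
  have hmean := Real.rpow_add_le_mul_rpow_add_rpow hα hβ (by linarith : 1 ≤ p - 1)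
  have hpow : (α + β) ^ p = (α + β) ^ (p - 1) * (α + β) := by
    rw [← Real.rpow_add_one' hs (by linarith), sub_add_cancel]
  have htwo : (2 : ℝ) ^ (2 - p) * 2 ^ (p - 1 - 1) = 1 := by
    rw [← Real.rpow_add two_pos, show 2 - p + (p - 1 - 1) = 0 by ring, Real.rpow_zero]
  calc 2 ^ (2 - p) * (α + β) ^ p = (α + β) * (2 ^ (2 - p) * (α + β) ^ (p - 1)) := by
        rw [hpow]; ring
    _ ≤ (α + β) * (2 ^ (2 - p) * (2 ^ (p - 1 - 1) * (α ^ (p - 1) + β ^ (p - 1)))) := by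
        gcongr
    _ = (α + β) * (α ^ (p - 1) + β ^ (p - 1)) := by
        linear_combination (α + β) * (α ^ (p - 1) + β ^ (p - 1)) * htwo

lemma two_rpow_mul_rpow_le_of_mem_Icc (hp : 2 ≤ p) (hα : 0 ≤ α) (hβ : 0 ≤ β) {s : ℝ}
    (hs : s ∈ Icc ((α - β) ^ 2) ((α + β) ^ 2)) :
    2 * (2 ^ (2 - p) * s ^ (p / 2)) ≤
      (α ^ (p - 2) + β ^ (p - 2)) * s + (α ^ (p - 2) - β ^ (p - 2)) * (α ^ 2 - β ^ 2) := by
  have hcvx : ConvexOn ℝ (Ici 0) fun t : ℝ ↦ 2 * (2 ^ (2 - p) * t ^ (p / 2)) :=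
    ((convexOn_rpow (by linarith)).smul (by positivity)).smul (by norm_num)
  have hsq {d : ℝ} (hd : 0 ≤ d) : (d ^ 2) ^ (p / 2) = d ^ p := by
    rw [← Real.rpow_natCast, ← Real.rpow_mul hd]; ring_nf
  have hα' : α ^ (p - 2) * α = α ^ (p - 1) := by
    rw [← Real.rpow_add_one' hα (by linarith)]; ring_nf
  have hβ' : β ^ (p - 2) * β = β ^ (p - 1) := by
    rw [← Real.rpow_add_one' hβ (by linarith)]; ring_nf
  have hsub : 2 ^ (2 - p) * |α - β| ^ p ≤ (α - β) * (α ^ (p - 1) - β ^ (p - 1)) :=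
    (mul_le_of_le_one_left (by positivity) (Real.rpow_le_one_of_one_le_of_nonpos one_le_two
      (by linarith))).trans (abs_sub_rpow_le_mul_sub_rpow hp hα hβ)
  have hsq_sub : ((α - β) ^ 2) ^ (p / 2) = |α - β| ^ p := by rw [← sq_abs, hsq (abs_nonneg _)]
  refine hcvx.le_affine_of_mem_Icc (mem_Ici.2 (sq_nonneg _)) (mem_Ici.2 (sq_nonneg _)) hs ?_ ?_
  · rw [hsq_sub]
    linear_combination 2 * hsub - 2 * (α - β) * (hα' - hβ')
  · rw [hsq (add_nonneg hα hβ)]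
    linear_combination 2 * two_rpow_mul_add_rpow_le hp hα hβ - 2 * (α + β) * (hα' + hβ')

end ScalarBounds

lemma two_mul_inner_rpow_smul_sub {V : Type*} [SeminormedAddCommGroup V] [InnerProductSpace ℝ V]
    (r : ℝ) (x y : V) :
    2 * ⟪‖x‖ ^ r • x - ‖y‖ ^ r • y, x - y⟫ =
      (‖x‖ ^ r + ‖y‖ ^ r) * ‖x - y‖ ^ 2 + (‖x‖ ^ r - ‖y‖ ^ r) * (‖x‖ ^ 2 - ‖y‖ ^ 2) := by
  rw [norm_sub_sq_real, inner_sub_left, inner_sub_right, inner_sub_right, real_inner_smul_left,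
    real_inner_smul_left, real_inner_smul_left, real_inner_smul_left, real_inner_self_eq_norm_sq,
    real_inner_self_eq_norm_sq, real_inner_comm y x]
  ring

lemma two_rpow_mul_norm_sub_rpow_le_inner {V : Type*} [SeminormedAddCommGroup V]
    [InnerProductSpace ℝ V] {p : ℝ} (hp : 2 ≤ p) (x y : V) :
    2 ^ (2 - p) * ‖x - y‖ ^ p ≤ ⟪‖x‖ ^ (p - 2) • x - ‖y‖ ^ (p - 2) • y, x - y⟫ := by
  have hs : ‖x - y‖ ^ 2 ∈ Icc ((‖x‖ - ‖y‖) ^ 2) ((‖x‖ + ‖y‖) ^ 2) :=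
    ⟨by simpa only [sq_abs] using pow_le_pow_left₀ (abs_nonneg _) (abs_norm_sub_norm_le x y) 2,
      pow_le_pow_left₀ (norm_nonneg _) (norm_sub_le x y) 2⟩
  have key := two_rpow_mul_rpow_le_of_mem_Icc hp (norm_nonneg x) (norm_nonneg y) hs
  rw [← two_mul_inner_rpow_smul_sub, ← Real.rpow_natCast, ← Real.rpow_mul (norm_nonneg _)] at key
  push_cast at key
  rw [mul_div_cancel₀ p two_ne_zero] at key
  linarith

lemma div_mul_two_rpow_sub_one_le_two_rpow {p : ℝ} (hp : 2 ≤ p) :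
    2 / (p * ((2 : ℝ) ^ (p - 1) - 1)) ≤ 2 ^ (2 - p) := by
  have hprod : (2 : ℝ) ^ (2 - p) * 2 ^ (p - 1) = 2 := by
    rw [← Real.rpow_add two_pos]; norm_num
  have hle : (2 : ℝ) ^ (2 - p) ≤ 1 := Real.rpow_le_one_of_one_le_of_nonpos one_le_two (by linarith)
  have hpos : (0 : ℝ) < 2 ^ (2 - p) := by positivity
  have hden : 0 < p * ((2 : ℝ) ^ (p - 1) - 1) := by
    have : (2 : ℝ) ≤ 2 ^ (p - 1) := by nlinarith
    nlinarith
  rw [div_le_iff₀ hden]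
  nlinarith

theorem pLaplace_monotonicity_general
    {V : Type*} [NormedAddCommGroup V] [InnerProductSpace ℝ V]
    (p : ℝ) (hp : 2 ≤ p) (x y : V) :
    ⟪‖x‖ ^ (p - 2) • x - ‖y‖ ^ (p - 2) • y, x - y⟫ ≥
      (2 / (p * ((2 : ℝ) ^ (p - 1) - 1))) * ‖x - y‖ ^ p :=
  calc 2 / (p * ((2 : ℝ) ^ (p - 1) - 1)) * ‖x - y‖ ^ p ≤ 2 ^ (2 - p) * ‖x - y‖ ^ p := by
        gcongr; exact div_mul_two_rpow_sub_one_le_two_rpow hp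
    _ ≤ _ := two_rpow_mul_norm_sub_rpow_le_inner hp x y

/-- Monotonicity inequality for the `p`-Laplacian:
`⟨|x|^{p-2}x - |y|^{p-2}y, x - y⟩ ≥ (2/(p(2^{p-1}-1)))|x-y|^p` for `p ≥ 2`. -/
theorem pLaplace_monotonicity
    {V : Type*} [NormedAddCommGroup V] [InnerProductSpace ℝ V] [FiniteDimensional ℝ V]
    (p : ℝ) (hp : 2 ≤ p) (x y : V) :
    ⟪‖x‖ ^ (p - 2) • x - ‖y‖ ^ (p - 2) • y, x - y⟫ ≥
      (2 / (p * ((2 : ℝ) ^ (p - 1) - 1))) * ‖x - y‖ ^ p :=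
  pLaplace_monotonicity_general p hp x y
end

section
/- Let V be a finite-dimensional real inner product space, p ≥ 2, and let a, b ∈ V with |a|, |b| arbitrary. Then ⟨a - b, |a|^{p-2}a - |b|^{p-2}b⟩ - ⟨u, a - b⟩⟨u, |a|^{p-2}a - |b|^{p-2}b⟩ ≥ (1/(p(2^{p-1}-1)))|a - b|^p - 2(|a|^p + |b|^p) for any unit vector u ∈ V. -/
open scoped RealInnerProductSpace
open Real
set_option maxHeartbeats 1000000

private lemma dle_aux1 {p x : ℝ} (hp : 1 ≤ p) (hx : 0 ≤ x) : x ^ (p - 1) * x = x ^ p := by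
  rcases eq_or_lt_of_le hx with h | h
  · simp [← h, Real.zero_rpow (by linarith : p ≠ 0)]
  · have := Real.rpow_add h (p - 1) 1
    rw [sub_add_cancel] at this
    rw [this, Real.rpow_one]

private lemma dle_aux2 {p x : ℝ} (hp : 2 ≤ p) (hx : 0 ≤ x) : x ^ (p - 2) * x ^ 2 = x ^ p := by
  rcases eq_or_lt_of_le hx with h | h
  · simp [← h, Real.zero_rpow (by linarith : p ≠ 0)]
  · have := Real.rpow_add h (p - 2) 2
    rw [sub_add_cancel] at this
    rw [this, Real.rpow_two]

/-- `x y^{p-1} + y x^{p-1} ≤ x^p + y^p` for nonneg `x, y`. -/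
private lemma dle_young {p x y : ℝ} (hp : 2 ≤ p) (hx : 0 ≤ x) (hy : 0 ≤ y) :
    x * y ^ (p - 1) + y * x ^ (p - 1) ≤ x ^ p + y ^ p := by
  have hxp := dle_aux1 (by linarith : 1 ≤ p) hx
  have hyp := dle_aux1 (by linarith : 1 ≤ p) hy
  rcases le_total x y with h | h
  · have hm : x ^ (p - 1) ≤ y ^ (p - 1) := Real.rpow_le_rpow hx h (by linarith)
    nlinarith [Real.rpow_nonneg hx (p - 1), Real.rpow_nonneg hy (p - 1)]
  · have hm : y ^ (p - 1) ≤ x ^ (p - 1) := Real.rpow_le_rpow hy h (by linarith)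
    nlinarith [Real.rpow_nonneg hx (p - 1), Real.rpow_nonneg hy (p - 1)]

/-- Pointwise estimate used for `div X_T` on the region `{r(u-v) ≥ T}`: for a unit
vector `u` and `p ≥ 2`,
`⟨a-b, G⟩ - ⟨u, a-b⟩⟨u, G⟩ ≥ (1/(p(2^{p-1}-1)))|a-b|^p - 2(|a|^p + |b|^p)`,
where `G = |a|^{p-2}a - |b|^{p-2}b`. -/
theorem divergence_lower_estimate
    {V : Type*} [NormedAddCommGroup V] [InnerProductSpace ℝ V] [FiniteDimensional ℝ V]
    (p : ℝ) (hp : 2 ≤ p) (a b u : V) (hu : ‖u‖ = 1) :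
    ⟪a - b, ‖a‖ ^ (p - 2) • a - ‖b‖ ^ (p - 2) • b⟫ -
        ⟪u, a - b⟫ * ⟪u, ‖a‖ ^ (p - 2) • a - ‖b‖ ^ (p - 2) • b⟫ ≥
      (1 / (p * ((2 : ℝ) ^ (p - 1) - 1))) * ‖a - b‖ ^ p - 2 * (‖a‖ ^ p + ‖b‖ ^ p) := by
  set x := ‖a‖ with hxdef
  set y := ‖b‖ with hydef
  have hx : 0 ≤ x := norm_nonneg a
  have hy : 0 ≤ y := norm_nonneg b
  set α := x ^ (p - 2) with hαdef
  set β := y ^ (p - 2) with hβdef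
  have hα : 0 ≤ α := Real.rpow_nonneg hx _
  have hβ : 0 ≤ β := Real.rpow_nonneg hy _
  set G := α • a - β • b with hGdef
  clear_value G
  clear_value α β
  clear_value x y
  -- Step 1: expand inner products
  have hinner : ⟪a - b, G⟫ = α * x ^ 2 + β * y ^ 2 - (α + β) * ⟪a, b⟫ := by
    simp only [hGdef, inner_sub_left, inner_sub_right, real_inner_smul_right,
      real_inner_self_eq_norm_sq, real_inner_comm b a]
    rw [← hxdef, ← hydef]
    ring
  have hns : ‖a - b‖ ^ (2 : ℕ) = x ^ 2 + y ^ 2 - 2 * ⟪a, b⟫ := by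
    rw [norm_sub_sq_real, ← hxdef, ← hydef]; ring
  -- monotonicity: ⟪a-b, G⟫ ≥ (1/2)(α+β)‖a-b‖²
  have hmono : ⟪a - b, G⟫ ≥ (1 / 2) * (α + β) * ‖a - b‖ ^ (2 : ℕ) := by
    rw [hinner, hns]
    have key : 0 ≤ (α - β) * (x ^ 2 - y ^ 2) := by
      rcases le_total x y with h | h
      · have h1 : α ≤ β := by
          rw [hαdef, hβdef]; exact Real.rpow_le_rpow hx h (by linarith)
        have h2 : x ^ 2 ≤ y ^ 2 := pow_le_pow_left₀ hx h 2
        nlinarith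
      · have h1 : β ≤ α := by
          rw [hαdef, hβdef]; exact Real.rpow_le_rpow hy h (by linarith)
        have h2 : y ^ 2 ≤ x ^ 2 := pow_le_pow_left₀ hy h 2
        nlinarith
    nlinarith
  -- Step 2: C‖a-b‖^p ≤ (1/2)(α+β)‖a-b‖²
  have hC : (1 / (p * ((2 : ℝ) ^ (p - 1) - 1))) * ‖a - b‖ ^ p ≤
      (1 / 2) * (α + β) * ‖a - b‖ ^ (2 : ℕ) := by
    set d := ‖a - b‖ with hddef
    have hd : 0 ≤ d := norm_nonneg _
    have h2p : (2 : ℝ) ≤ (2 : ℝ) ^ (p - 1) := by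
      calc (2 : ℝ) = (2 : ℝ) ^ (1 : ℝ) := (Real.rpow_one 2).symm
        _ ≤ (2 : ℝ) ^ (p - 1) := Real.rpow_le_rpow_left_iff (by norm_num) |>.2 (by linarith)
    have hden : 0 < p * ((2 : ℝ) ^ (p - 1) - 1) := by
      apply mul_pos (by linarith); linarith
    -- d^{p-2} ≤ 2^{p-2} (α + β)
    have hd2 : d ^ (p - 2) ≤ (2 : ℝ) ^ (p - 2) * (α + β) := by
      have hdle : d ≤ 2 * max x y := by
        calc d ≤ x + y := by rw [hddef, hxdef, hydef]; exact norm_sub_le a b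
          _ ≤ 2 * max x y := by
              rcases le_total x y with h | h <;> simp [max_eq_right, max_eq_left, h] <;> linarith
      have h1 : d ^ (p - 2) ≤ (2 * max x y) ^ (p - 2) :=
        Real.rpow_le_rpow hd hdle (by linarith)
      have h2 : (2 * max x y) ^ (p - 2) = (2 : ℝ) ^ (p - 2) * (max x y) ^ (p - 2) :=
        Real.mul_rpow (by norm_num) (le_max_of_le_left hx)
      have h3 : (max x y) ^ (p - 2) ≤ α + β := by
        rcases le_total x y with h | h
        · rw [max_eq_right h]; linarith
        · rw [max_eq_left h]; linarith
      calc d ^ (p - 2) ≤ (2 : ℝ) ^ (p - 2) * (max x y) ^ (p - 2) := by rw [← h2]; exact h1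
        _ ≤ (2 : ℝ) ^ (p - 2) * (α + β) :=
            mul_le_mul_of_nonneg_left h3 (Real.rpow_nonneg (by norm_num) _)
    have hdp : d ^ p = d ^ (p - 2) * d ^ (2 : ℕ) := (dle_aux2 hp hd).symm
    -- constant comparison: 2^{p-2}/(p(2^{p-1}-1)) ≤ 1/2
    have hconst : (2 : ℝ) ^ (p - 2) / (p * ((2 : ℝ) ^ (p - 1) - 1)) ≤ 1 / 2 := by
      rw [div_le_div_iff₀ hden (by norm_num)]
      have h21 : (2 : ℝ) ^ (p - 1) = 2 * (2 : ℝ) ^ (p - 2) := by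
        have := Real.rpow_add (by norm_num : (0:ℝ) < 2) (p - 2) 1
        have e : p - 2 + 1 = p - 1 := by ring
        rw [e, Real.rpow_one] at this
        linarith
      have h2pos : (1 : ℝ) ≤ (2 : ℝ) ^ (p - 2) := by
        rw [← Real.rpow_zero (2 : ℝ)]
        exact Real.rpow_le_rpow_left_iff (by norm_num) |>.2 (by linarith)
      nlinarith
    rw [hdp]
    have hdsq : (0 : ℝ) ≤ d ^ (2 : ℕ) := sq_nonneg d
    calc (1 / (p * ((2 : ℝ) ^ (p - 1) - 1))) * (d ^ (p - 2) * d ^ (2 : ℕ))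
        ≤ (1 / (p * ((2 : ℝ) ^ (p - 1) - 1))) * ((2 : ℝ) ^ (p - 2) * (α + β) * d ^ (2 : ℕ)) := by
          apply mul_le_mul_of_nonneg_left _ (by positivity)
          exact mul_le_mul_of_nonneg_right hd2 hdsq
      _ = ((2 : ℝ) ^ (p - 2) / (p * ((2 : ℝ) ^ (p - 1) - 1))) * ((α + β) * d ^ (2 : ℕ)) := by
          ring
      _ ≤ (1 / 2) * ((α + β) * d ^ (2 : ℕ)) := by
          apply mul_le_mul_of_nonneg_right hconst
          positivity
      _ = (1 / 2) * (α + β) * d ^ (2 : ℕ) := by ring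
  -- Step 3: cross term bound
  have hcross : ⟪u, a - b⟫ * ⟪u, G⟫ ≤ 2 * (x ^ p + y ^ p) := by
    have h1 : |⟪u, a - b⟫| ≤ ‖a - b‖ := by
      have := abs_real_inner_le_norm u (a - b)
      simpa [hu] using this
    have h2 : |⟪u, G⟫| ≤ ‖G‖ := by
      have := abs_real_inner_le_norm u G
      simpa [hu] using this
    have hG : ‖G‖ ≤ x ^ (p - 1) + y ^ (p - 1) := by
      calc ‖G‖ ≤ ‖α • a‖ + ‖β • b‖ := hGdef ▸ norm_sub_le _ _
        _ = α * x + β * y := by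
            rw [norm_smul, norm_smul, Real.norm_eq_abs, Real.norm_eq_abs,
              abs_of_nonneg hα, abs_of_nonneg hβ, ← hxdef, ← hydef]
        _ = x ^ (p - 1) + y ^ (p - 1) := by
            have h1 : α * x = x ^ (p - 1) := by
              rw [hαdef]
              rcases eq_or_lt_of_le hx with h | h
              · simp [← h, Real.zero_rpow (by linarith : p - 1 ≠ 0)]
              · have := Real.rpow_add h (p - 2) 1
                have e : p - 2 + 1 = p - 1 := by ring
                rw [e] at this
                rw [this, Real.rpow_one]
            have h2 : β * y = y ^ (p - 1) := by
              rw [hβdef]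
              rcases eq_or_lt_of_le hy with h | h
              · simp [← h, Real.zero_rpow (by linarith : p - 1 ≠ 0)]
              · have := Real.rpow_add h (p - 2) 1
                have e : p - 2 + 1 = p - 1 := by ring
                rw [e] at this
                rw [this, Real.rpow_one]
            rw [h1, h2]
    have hab : ‖a - b‖ ≤ x + y := by rw [hxdef, hydef]; exact norm_sub_le a b
    have hprod : ⟪u, a - b⟫ * ⟪u, G⟫ ≤ (x + y) * (x ^ (p - 1) + y ^ (p - 1)) := by
      calc ⟪u, a - b⟫ * ⟪u, G⟫ ≤ |⟪u, a - b⟫ * ⟪u, G⟫| := le_abs_self _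
        _ = |⟪u, a - b⟫| * |⟪u, G⟫| := abs_mul _ _
        _ ≤ ‖a - b‖ * ‖G‖ := by
            apply mul_le_mul h1 h2 (abs_nonneg _) (norm_nonneg _)
        _ ≤ (x + y) * (x ^ (p - 1) + y ^ (p - 1)) := by
            apply mul_le_mul hab hG (norm_nonneg _) (by positivity)
    have hxp := dle_aux1 (by linarith : 1 ≤ p) hx
    have hyp := dle_aux1 (by linarith : 1 ≤ p) hy
    have hyoung := dle_young hp hx hy
    nlinarith [Real.rpow_nonneg hx (p-1), Real.rpow_nonneg hy (p-1), Real.rpow_nonneg hx p, Real.rpow_nonneg hy p]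
  -- assemble
  have : ⟪a - b, G⟫ - ⟪u, a - b⟫ * ⟪u, G⟫ ≥
      (1 / (p * ((2 : ℝ) ^ (p - 1) - 1))) * ‖a - b‖ ^ p - 2 * (x ^ p + y ^ p) := by
    linarith
  exact this
end

section
/- Let V be a finite-dimensional real inner product space, p ≥ 2, and x, y ∈ V. Then p(|x|^p + |y|^p) ≥ p(|x|^{p-2} + |y|^{p-2})⟨x, y⟩ + (2/(2^{p-1}-1))|x - y|^p. -/
open scoped RealInnerProductSpace

private lemma sl_superadd {q a b : ℝ} (hq : 1 ≤ q) (ha : 0 ≤ a) (hb : 0 ≤ b) :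
    a ^ q + b ^ q ≤ (a + b) ^ q := by
  lift a to NNReal using ha
  lift b to NNReal using hb
  exact_mod_cast NNReal.add_rpow_le_rpow_add a b hq

private lemma sl_twopow {q a b : ℝ} (hq : 1 ≤ q) (ha : 0 ≤ a) (hb : 0 ≤ b) :
    (a + b) ^ q ≤ 2 ^ (q - 1) * (a ^ q + b ^ q) := by
  lift a to NNReal using ha
  lift b to NNReal using hb
  exact_mod_cast NNReal.rpow_add_le_mul_rpow_add_rpow a b hq

private lemma sl_mul_self {q r : ℝ} (hq : 0 < q + 1) (hr : 0 ≤ r) :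
    r ^ q * r = r ^ (q + 1) := by
  rcases eq_or_lt_of_le hr with h | h
  · rw [← h, Real.zero_rpow (by linarith : q + 1 ≠ 0), mul_zero]
  · rw [Real.rpow_add_one h.ne' q]

private lemma sl_sq_rpow {p d : ℝ} (hp : 0 ≤ p) (hd : 0 ≤ d) :
    (d ^ 2) ^ (p / 2) = d ^ p := by
  rw [← Real.rpow_natCast d 2, ← Real.rpow_mul hd]
  norm_num
  rw [show (2:ℝ) * (p / 2) = p by ring]

/-- Scalar core of the summed Lindqvist inequality. -/
private lemma sl_key {p r s t d : ℝ} (hp : 2 ≤ p) (hr : 0 ≤ r) (hs : 0 ≤ s)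
    (hsr : s ≤ r) (htl : -(r * s) ≤ t) (htu : t ≤ r * s) (hd : 0 ≤ d)
    (hd2 : d ^ 2 = r ^ 2 - 2 * t + s ^ 2) :
    2 ^ (2 - p) * d ^ p ≤ r ^ p + s ^ p - (r ^ (p - 2) + s ^ (p - 2)) * t := by
  have hq1 : (1 : ℝ) ≤ p - 1 := by linarith
  have h2p : (0:ℝ) < 2 ^ (2 - p) := Real.rpow_pos_of_pos (by norm_num) _
  have h2ple1 : (2:ℝ) ^ (2 - p) ≤ 1 :=
    Real.rpow_le_one_of_one_le_of_nonpos (by norm_num) (by linarith)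
  -- basic rpow identities
  have hAr : r ^ (p - 1) * r = r ^ p := by
    have := sl_mul_self (q := p - 1) (r := r) (by linarith) hr; rw [this]; ring_nf
  have hBs : s ^ (p - 1) * s = s ^ p := by
    have := sl_mul_self (q := p - 1) (r := s) (by linarith) hs; rw [this]; ring_nf
  have hA2r : r ^ (p - 2) * r = r ^ (p - 1) := by
    have := sl_mul_self (q := p - 2) (r := r) (by linarith) hr; rw [this]; ring_nf
  have hB2s : s ^ (p - 2) * s = s ^ (p - 1) := by
    have := sl_mul_self (q := p - 2) (r := s) (by linarith) hs; rw [this]; ring_nf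
  -- endpoint inequalities
  have hrs0 : 0 ≤ r - s := by linarith
  have hsup : (r - s) ^ (p - 1) + s ^ (p - 1) ≤ r ^ (p - 1) := by
    have := sl_superadd hq1 hrs0 hs
    rwa [sub_add_cancel] at this
  have hplus : 2 ^ (2 - p) * (r - s) ^ p ≤ (r ^ (p - 1) - s ^ (p - 1)) * (r - s) := by
    have h1 : (r - s) ^ p = (r - s) ^ (p - 1) * (r - s) := by
      rw [sl_mul_self (by linarith) hrs0]; ring_nf
    have h2 : (r - s) ^ (p - 1) * (r - s) ≤ (r ^ (p - 1) - s ^ (p - 1)) * (r - s) :=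
      mul_le_mul_of_nonneg_right (by linarith) hrs0
    calc 2 ^ (2 - p) * (r - s) ^ p ≤ 1 * (r - s) ^ p := by
          apply mul_le_mul_of_nonneg_right h2ple1 (Real.rpow_nonneg hrs0 p)
      _ = (r - s) ^ (p - 1) * (r - s) := by rw [one_mul, h1]
      _ ≤ _ := h2
  have hminus : 2 ^ (2 - p) * (r + s) ^ p ≤ (r ^ (p - 1) + s ^ (p - 1)) * (r + s) := by
    have h1 : (r + s) ^ p = (r + s) ^ (p - 1) * (r + s) := by
      rw [sl_mul_self (by linarith) (by linarith)]; ring_nf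
    have h2 : (r + s) ^ (p - 1) ≤ 2 ^ (p - 2) * (r ^ (p - 1) + s ^ (p - 1)) := by
      have := sl_twopow hq1 hr hs
      have e : p - 1 - 1 = p - 2 := by ring
      rwa [e] at this
    have hcanc : (2:ℝ) ^ (2 - p) * 2 ^ (p - 2) = 1 := by
      rw [← Real.rpow_add (by norm_num : (0:ℝ) < 2)]; norm_num
    calc 2 ^ (2 - p) * (r + s) ^ p = 2 ^ (2 - p) * ((r + s) ^ (p - 1) * (r + s)) := by rw [h1]
      _ ≤ 2 ^ (2 - p) * (2 ^ (p - 2) * (r ^ (p - 1) + s ^ (p - 1)) * (r + s)) := by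
          apply mul_le_mul_of_nonneg_left _ h2p.le
          exact mul_le_mul_of_nonneg_right h2 (by linarith)
      _ = (r ^ (p - 1) + s ^ (p - 1)) * (r + s) := by
          rw [show 2 ^ (2-p) * (2 ^ (p-2) * (r ^ (p-1) + s ^ (p-1)) * (r + s))
              = (2:ℝ) ^ (2-p) * 2 ^ (p-2) * ((r ^ (p-1) + s ^ (p-1)) * (r + s)) by ring,
            hcanc, one_mul]
  -- degenerate case s = 0
  rcases eq_or_lt_of_le hs with hs0 | hs0
  · have hs0 : s = 0 := hs0.symm
    subst hs0
    have ht0 : t = 0 := by nlinarith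
    subst ht0
    have hdr : d = r := by nlinarith [sq_nonneg (d - r), sq_nonneg (d + r)]
    subst hdr
    have h0p : (0:ℝ) ^ p = 0 := Real.zero_rpow (by linarith)
    rw [h0p]
    nlinarith [Real.rpow_nonneg hd p, mul_le_mul_of_nonneg_right h2ple1 (Real.rpow_nonneg hd p)]
  -- main case: s > 0, interpolation by convexity
  have hr0 : 0 < r := lt_of_lt_of_le hs0 hsr
  have hrs : 0 < r * s := mul_pos hr0 hs0
  set lam : ℝ := (r * s - t) / (2 * (r * s)) with hlam
  have hlam0 : 0 ≤ lam := div_nonneg (by linarith) (by linarith)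
  have hlam1 : lam ≤ 1 := by
    rw [hlam, div_le_one (by linarith)]; linarith
  have hconv : ((1 - lam) * (r - s) ^ 2 + lam * (r + s) ^ 2) ^ (p / 2)
      ≤ (1 - lam) * ((r - s) ^ 2) ^ (p / 2) + lam * ((r + s) ^ 2) ^ (p / 2) := by
    have := (convexOn_rpow (p := p / 2) (by linarith)).2
      (Set.mem_Ici.mpr (sq_nonneg (r - s))) (Set.mem_Ici.mpr (sq_nonneg (r + s)))
      (by linarith : (0:ℝ) ≤ 1 - lam) hlam0 (by ring)
    simpa using this
  have hd2' : d ^ 2 = (1 - lam) * (r - s) ^ 2 + lam * (r + s) ^ 2 := by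
    rw [hd2, hlam]; field_simp; ring
  have hdp : d ^ p = (1 - lam) * (r - s) ^ 2 * 1 + lam * (r + s) ^ 2 * 1 → True := fun _ => trivial
  have hchain : d ^ p ≤ (1 - lam) * (r - s) ^ p + lam * (r + s) ^ p := by
    rw [← sl_sq_rpow (by linarith) hd, ← sl_sq_rpow (by linarith) hrs0,
      ← sl_sq_rpow (by linarith) (by linarith : (0:ℝ) ≤ r + s), hd2']
    exact hconv
  have hmain : 2 ^ (2 - p) * d ^ p
      ≤ (1 - lam) * ((r ^ (p-1) - s ^ (p-1)) * (r - s)) + lam * ((r ^ (p-1) + s ^ (p-1)) * (r + s)) := by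
    calc 2 ^ (2 - p) * d ^ p
        ≤ 2 ^ (2 - p) * ((1 - lam) * (r - s) ^ p + lam * (r + s) ^ p) :=
          mul_le_mul_of_nonneg_left hchain h2p.le
      _ = (1 - lam) * (2 ^ (2 - p) * (r - s) ^ p) + lam * (2 ^ (2 - p) * (r + s) ^ p) := by ring
      _ ≤ _ := by
          apply add_le_add
          · exact mul_le_mul_of_nonneg_left hplus (by linarith)
          · exact mul_le_mul_of_nonneg_left hminus hlam0
  have h2rs : 2 * (r * s) * lam = r * s - t := by
    rw [hlam]; field_simp
  refine hmain.trans (le_of_eq ?_)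
  linear_combination hAr + hBs + (1 - 2*lam)*s*hA2r + (1 - 2*lam)*r*hB2s +
    (r ^ (p-2) + s ^ (p-2)) * h2rs

private lemma sl_main {V : Type*} [NormedAddCommGroup V] [InnerProductSpace ℝ V]
    (p : ℝ) (hp : 2 ≤ p) (x y : V) (hxy : ‖y‖ ≤ ‖x‖) :
    p * (‖x‖ ^ p + ‖y‖ ^ p) ≥
      p * (‖x‖ ^ (p - 2) + ‖y‖ ^ (p - 2)) * ⟪x, y⟫ +
        (2 / ((2 : ℝ) ^ (p - 1) - 1)) * ‖x - y‖ ^ p := by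
  have habs := abs_le.mp (abs_real_inner_le_norm x y)
  have hd2 : ‖x - y‖ ^ 2 = ‖x‖ ^ 2 - 2 * ⟪x, y⟫ + ‖y‖ ^ 2 := norm_sub_sq_real x y
  have hk := sl_key hp (norm_nonneg x) (norm_nonneg y) hxy habs.1 habs.2
    (norm_nonneg (x - y)) hd2
  have h2 : (2:ℝ) ≤ 2 ^ (p - 1) := by
    calc (2:ℝ) = 2 ^ (1:ℝ) := (Real.rpow_one 2).symm
      _ ≤ 2 ^ (p - 1) := by
          exact (Real.rpow_le_rpow_left_iff one_lt_two).mpr (by linarith)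
  have hden : (0:ℝ) < 2 ^ (p - 1) - 1 := by linarith
  have hcanc : (2:ℝ) ^ (2 - p) * 2 ^ (p - 1) = 2 := by
    rw [← Real.rpow_add (by norm_num : (0:ℝ) < 2)]
    norm_num
  have h2ple1 : (2:ℝ) ^ (2 - p) ≤ 1 :=
    Real.rpow_le_one_of_one_le_of_nonpos (by norm_num) (by linarith)
  have h2pp : (0:ℝ) < 2 ^ (2 - p) := Real.rpow_pos_of_pos (by norm_num) _
  have hcmp : 2 / ((2:ℝ) ^ (p - 1) - 1) ≤ p * 2 ^ (2 - p) := by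
    rw [div_le_iff₀ hden]
    nlinarith [mul_nonneg (by linarith : (0:ℝ) ≤ p) (by linarith : (0:ℝ) ≤ 1 - 2 ^ (2 - p))]
  have hdp : (0:ℝ) ≤ ‖x - y‖ ^ p := Real.rpow_nonneg (norm_nonneg _) p
  have h1 := mul_le_mul_of_nonneg_left hk (by linarith : (0:ℝ) ≤ p)
  have h2' := mul_le_mul_of_nonneg_right hcmp hdp
  nlinarith [h1, h2']

/-- Summed Lindqvist inequality:
`p(|x|^p + |y|^p) ≥ p(|x|^{p-2} + |y|^{p-2})⟨x,y⟩ + (2/(2^{p-1}-1))|x-y|^p`. -/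
theorem summed_lindqvist
    {V : Type*} [NormedAddCommGroup V] [InnerProductSpace ℝ V] [FiniteDimensional ℝ V]
    (p : ℝ) (hp : 2 ≤ p) (x y : V) :
    p * (‖x‖ ^ p + ‖y‖ ^ p) ≥
      p * (‖x‖ ^ (p - 2) + ‖y‖ ^ (p - 2)) * ⟪x, y⟫ +
        (2 / ((2 : ℝ) ^ (p - 1) - 1)) * ‖x - y‖ ^ p := by
  rcases le_total ‖y‖ ‖x‖ with h | h
  · exact sl_main p hp x y h
  · have := sl_main p hp y x h
    rw [real_inner_comm, ← norm_neg (y - x)] at this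
    simpa [neg_sub, add_comm] using this
end
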